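/- arXiv:1810.10806 — 3 statements merged into one kernel-verified Lean document; each statement's English description precedes it below -/
import Mathlib

section
/- Let p, q be complex numbers with |p| < 1, |q| < 1 and let u, v be fixed square roots, u² = p, v² = q. Then for any z ≠ 0 such that all factors are defined, the quadratic transformation Γ(z²;p,q) = Γ(z;p,q)·Γ(−z;p,q)·Γ(vz;p,q)·Γ(−vz;p,q)·Γ(uz;p,q)·Γ(−uz;p,q)·Γ(uvz;p,q)·Γ(−uvz;p,q) holds. -/
/-!
The products converge absolutely, so they may be regrouped and multiplied factor by factor.
Pairing `w` with `-w` squares the variable and the nomes: `Γ(w;p,q) Γ(-w;p,q) = Γ(w²;p²,q²)`.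
Splitting the indices of `Γ(x;p,q)` by parity gives
`Γ(x;p,q) = Γ(x;p²,q²) Γ(qx;p²,q²) Γ(px;p²,q²) Γ(pqx;p²,q²)`.
For `x = z²` the four variables on the right are the squares of `z`, `vz`, `uz` and `uvz`.
-/

open Complex Real Filter Topology

/-- The infinite q-Pochhammer symbol (z;q)_inf. -/
noncomputable def qpoch (z q : ℂ) : ℂ := ∏' j : ℕ, (1 - z * q ^ j)

/-- The elliptic gamma function Γ(z;p,q). -/
noncomputable def egamma (z p q : ℂ) : ℂ :=
  ∏' jk : ℕ × ℕ, (1 - z⁻¹ * p ^ (jk.1 + 1) * q ^ (jk.2 + 1)) / (1 - z * p ^ jk.1 * q ^ jk.2)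

/-- The short Jacobi theta function θ(z;p) (base first argument). -/
noncomputable def theta (p z : ℂ) : ℂ := qpoch z p * qpoch (p * z⁻¹) p

theorem HasProd.prod_divMod {α : Type*} [CommMonoid α] [TopologicalSpace α] [ContinuousMul α]
    [RegularSpace α] {f : ℕ × ℕ → α} {a : α} (hf : HasProd f a) (n : ℕ) [NeZero n] :
    HasProd (fun jk : ℕ × ℕ => ∏ ab : Fin n × Fin n, f (jk.1 * n + ab.1, jk.2 * n + ab.2))
      a := by
  let e : (ℕ × ℕ) × (Fin n × Fin n) ≃ ℕ × ℕ :=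
    (Equiv.prodProdProdComm ℕ ℕ (Fin n) (Fin n)).trans
      ((Nat.divModEquiv n).symm.prodCongr (Nat.divModEquiv n).symm)
  exact (e.hasProd_iff.2 hf).prod_fiberwise fun jk => hasProd_fintype _

theorem multipliable_one_sub_mul_div_one_sub_mul {ι 𝕜 : Type*} [NormedField 𝕜]
    [CompleteSpace 𝕜] {t : ι → 𝕜} (ht : Summable fun i => ‖t i‖) (a b : 𝕜) :
    Multipliable fun i => (1 - a * t i) / (1 - b * t i) := by
  have hsub : Summable fun i => ‖(1 - a * t i) / (1 - b * t i) - 1‖ := by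
    refine (ht.mul_left (2 * ‖b - a‖)).of_norm_bounded_eventually ?_
    filter_upwards [(ht.mul_left ‖b‖).tendsto_cofinite_zero.eventually_le_const one_half_pos]
      with i hi
    have hden : 1 / 2 ≤ ‖1 - b * t i‖ := by
      have := norm_sub_norm_le 1 (b * t i)
      rw [norm_one, norm_mul] at this
      linarith
    rw [norm_norm, div_sub_one (norm_pos_iff.mp (by linarith)), norm_div,
      div_le_iff₀ (by linarith), show 1 - a * t i - (1 - b * t i) = (b - a) * t i by ring,
      norm_mul]
    nlinarith [mul_le_mul_of_nonneg_left hden (by positivity : 0 ≤ 2 * ‖b - a‖ * ‖t i‖)]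
  simpa using multipliable_one_add_of_summable hsub

theorem inv_mul_mul_pow_add_two {K : Type*} [Field K] (a x : K) (n : ℕ) :
    (a * x)⁻¹ * a ^ (n + 2) = x⁻¹ * a ^ (n + 1) :=
  calc (a * x)⁻¹ * a ^ (n + 2) = x⁻¹ * (a⁻¹ * a * a) * a ^ n := by ring
    _ = x⁻¹ * a ^ (n + 1) := by rw [inv_mul_mul_self]; ring

noncomputable def egammaFactor (w p q : ℂ) (jk : ℕ × ℕ) : ℂ :=
  (1 - w⁻¹ * p ^ (jk.1 + 1) * q ^ (jk.2 + 1)) / (1 - w * p ^ jk.1 * q ^ jk.2)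

theorem egammaFactor_mul_egammaFactor_neg (w p q : ℂ) (jk : ℕ × ℕ) :
    egammaFactor w p q jk * egammaFactor (-w) p q jk =
      egammaFactor (w ^ 2) (p ^ 2) (q ^ 2) jk := by
  simp only [egammaFactor, div_mul_div_comm]
  congr 1 <;> ring

/-- The factors do not match one by one, since the numerator of the factor at `(j, k)` carries
the exponents `(j + 1, k + 1)`; only the blocks of four do. -/
theorem prod_egammaFactor_divMod_two (x p q : ℂ) (jk : ℕ × ℕ) :
    ∏ ab : Fin 2 × Fin 2, egammaFactor x p q (jk.1 * 2 + ab.1, jk.2 * 2 + ab.2) =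
      egammaFactor x (p ^ 2) (q ^ 2) jk * egammaFactor (q * x) (p ^ 2) (q ^ 2) jk *
        egammaFactor (p * x) (p ^ 2) (q ^ 2) jk *
        egammaFactor (p * q * x) (p ^ 2) (q ^ 2) jk := by
  obtain ⟨j, k⟩ := jk
  have hj : 2 * (j + 1) = j * 2 + 2 := by ring
  have hk : 2 * (k + 1) = k * 2 + 2 := by ring
  have hq : (q * x)⁻¹ * (p ^ 2) ^ (j + 1) * (q ^ 2) ^ (k + 1) =
      x⁻¹ * p ^ (j * 2 + 2) * q ^ (k * 2 + 1) := by
    rw [mul_right_comm, ← pow_mul, ← pow_mul, hk, inv_mul_mul_pow_add_two]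
    ring
  have hp : (p * x)⁻¹ * (p ^ 2) ^ (j + 1) * (q ^ 2) ^ (k + 1) =
      x⁻¹ * p ^ (j * 2 + 1) * q ^ (k * 2 + 2) := by
    rw [← pow_mul, ← pow_mul, hj, inv_mul_mul_pow_add_two]
    ring
  have hpq : (p * q * x)⁻¹ * (p ^ 2) ^ (j + 1) * (q ^ 2) ^ (k + 1) =
      x⁻¹ * p ^ (j * 2 + 1) * q ^ (k * 2 + 1) := by
    rw [← pow_mul, ← pow_mul, hj, hk, mul_assoc p, inv_mul_mul_pow_add_two, mul_right_comm,
      inv_mul_mul_pow_add_two]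
    ring
  simp only [Fintype.prod_prod_type, Fin.prod_univ_two, Fin.val_zero, Fin.val_one, add_zero,
    egammaFactor]
  rw [hq, hp, hpq]
  simp only [div_mul_div_comm]
  congr 1 <;> ring

section

variable {p q : ℂ}

theorem summable_norm_pow_mul_pow (hp : ‖p‖ < 1) (hq : ‖q‖ < 1) :
    Summable fun jk : ℕ × ℕ => ‖p ^ jk.1 * q ^ jk.2‖ :=
  (summable_norm_geometric_of_norm_lt_one hp).mul_norm (summable_norm_geometric_of_norm_lt_one hq)

theorem hasProd_egammaFactor (hp : ‖p‖ < 1) (hq : ‖q‖ < 1) (w : ℂ) :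
    HasProd (egammaFactor w p q) (egamma w p q) := by
  refine Multipliable.hasProd ?_
  convert multipliable_one_sub_mul_div_one_sub_mul (summable_norm_pow_mul_pow hp hq)
    (w⁻¹ * p * q) w using 2 with jk
  simp only [egammaFactor]
  ring

theorem egamma_mul_egamma_neg (hp : ‖p‖ < 1) (hq : ‖q‖ < 1) (w : ℂ) :
    egamma w p q * egamma (-w) p q = egamma (w ^ 2) (p ^ 2) (q ^ 2) := by
  rw [← ((hasProd_egammaFactor hp hq w).mul (hasProd_egammaFactor hp hq (-w))).tprod_eq]
  exact tprod_congr (egammaFactor_mul_egammaFactor_neg w p q)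

theorem egamma_eq_prod_parity (hp : ‖p‖ < 1) (hq : ‖q‖ < 1) (x : ℂ) :
    egamma x p q = egamma x (p ^ 2) (q ^ 2) * egamma (q * x) (p ^ 2) (q ^ 2) *
      egamma (p * x) (p ^ 2) (q ^ 2) * egamma (p * q * x) (p ^ 2) (q ^ 2) := by
  have hp2 : ‖p ^ 2‖ < 1 := by rw [norm_pow]; exact pow_lt_one₀ (norm_nonneg p) hp two_ne_zero
  have hq2 : ‖q ^ 2‖ < 1 := by rw [norm_pow]; exact pow_lt_one₀ (norm_nonneg q) hq two_ne_zero
  have hsplit := (hasProd_egammaFactor hp hq x).prod_divMod 2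
  simp only [prod_egammaFactor_divMod_two] at hsplit
  exact hsplit.unique <|
    (((hasProd_egammaFactor hp2 hq2 x).mul (hasProd_egammaFactor hp2 hq2 (q * x))).mul
      (hasProd_egammaFactor hp2 hq2 (p * x))).mul (hasProd_egammaFactor hp2 hq2 (p * q * x))

end

theorem egamma_quadratic_transformation_general (p q u v z : ℂ) (hp : ‖p‖ < 1) (hq : ‖q‖ < 1)
    (hu : u ^ 2 = p) (hv : v ^ 2 = q) :
    egamma (z ^ 2) p q =
      egamma z p q * egamma (-z) p q * egamma (v * z) p q * egamma (-(v * z)) p q *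
        egamma (u * z) p q * egamma (-(u * z)) p q *
        egamma (u * v * z) p q * egamma (-(u * v * z)) p q := by
  have hz := egamma_mul_egamma_neg hp hq z
  have hvz := egamma_mul_egamma_neg hp hq (v * z)
  have huz := egamma_mul_egamma_neg hp hq (u * z)
  have huvz := egamma_mul_egamma_neg hp hq (u * v * z)
  rw [mul_pow, hv] at hvz
  rw [mul_pow, hu] at huz
  rw [mul_pow, mul_pow, hu, hv] at huvz
  rw [egamma_eq_prod_parity hp hq, ← hz, ← hvz, ← huz, ← huvz]
  ring

theorem egamma_quadratic_transformation (p q u v z : ℂ) (hp : ‖p‖ < 1) (hq : ‖q‖ < 1)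
    (hu : u ^ 2 = p) (hv : v ^ 2 = q) (hz0 : z ≠ 0)
    (hdef : ∀ w ∈ ({z ^ 2, z, -z, v * z, -(v * z), u * z, -(u * z), u * v * z, -(u * v * z)} : Set ℂ),
      ∀ j k : ℕ, w * p ^ j * q ^ k ≠ 1) :
    egamma (z ^ 2) p q =
      egamma z p q * egamma (-z) p q * egamma (v * z) p q * egamma (-(v * z)) p q *
        egamma (u * z) p q * egamma (-(u * z)) p q *
        egamma (u * v * z) p q * egamma (-(u * v * z)) p q :=
  egamma_quadratic_transformation_general p q u v z hp hq hu hv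
end

section
/- (Jacobi triple product identity) For any complex p with |p| < 1 and any z ≠ 0, one has (z;p)_∞ (p z^{−1};p)_∞ = (1/(p;p)_∞) · ∑_{n∈ℤ} p^{n(n−1)/2} (−z)^n, the bilateral series converging absolutely. -/
open Complex Real Filter Topology

/-!
Putting `t = -z q⁻ᴺ` and `m = 2N` in the `q`-binomial theorem
`∏_{j<m} (1 + t q^j) = ∑_k [m, k]_q q^{k(k-1)/2} t^k` gives Cauchy's finite form
`(z;q)_N (q/z;q)_N = ∑_{|n| ≤ N} [2N, N+n]_q q^{n(n-1)/2} (-z)^n`.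
As `N → ∞`, `[2N, N+n]_q = (q;q)_{2N} / ((q;q)_{N+n} (q;q)_{N-n})` tends to `1/(q;q)_∞` while
staying uniformly bounded, so Tannery's theorem passes to the limit, dominated by the absolutely
convergent theta series. The substitution needs `q ≠ 0`; at `q = 0` both sides are `1 - z`.
-/

open Finset

section QBinomial

variable {R : Type*} [CommRing R]

def qpochFin (z q : R) (n : ℕ) : R := ∏ j ∈ range n, (1 - z * q ^ j)

def qbinom (q : R) : ℕ → ℕ → R
  | _, 0 => 1
  | 0, _ + 1 => 0
  | m + 1, k + 1 => q ^ (k + 1) * qbinom q m (k + 1) + qbinom q m k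

variable (q : R)

lemma qpochFin_succ (z : R) (n : ℕ) : qpochFin z q (n + 1) = qpochFin z q n * (1 - z * q ^ n) :=
  prod_range_succ _ _

@[simp] lemma qbinom_zero_right (m : ℕ) : qbinom q m 0 = 1 := by cases m <;> rfl

lemma qbinom_succ_succ (m k : ℕ) :
    qbinom q (m + 1) (k + 1) = q ^ (k + 1) * qbinom q m (k + 1) + qbinom q m k := rfl

lemma qbinom_eq_zero_of_lt : ∀ {m k : ℕ}, m < k → qbinom q m k = 0
  | 0, _ + 1, _ => rfl
  | _ + 1, _ + 1, h => by
    rw [qbinom_succ_succ, qbinom_eq_zero_of_lt (by omega), qbinom_eq_zero_of_lt (by omega),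
      mul_zero, add_zero]

lemma qbinom_self : ∀ m : ℕ, qbinom q m m = 1
  | 0 => rfl
  | m + 1 => by rw [qbinom_succ_succ, qbinom_eq_zero_of_lt q m.lt_succ_self, qbinom_self m,
      mul_zero, zero_add]

lemma qbinom_mul_qpochFin : ∀ {m k : ℕ}, k ≤ m →
    qbinom q m k * qpochFin q q k * qpochFin q q (m - k) = qpochFin q q m
  | m, 0, _ => by simp [qpochFin]
  | m + 1, k + 1, h => by
    rcases (Nat.le_of_succ_le_succ h).eq_or_lt with rfl | hlt
    · simp [qbinom_self, qpochFin]
    · obtain ⟨d, rfl⟩ := Nat.exists_eq_add_of_lt hlt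
      have h₁ := qbinom_mul_qpochFin (m := k + d + 1) (k := k + 1) (by omega)
      have h₂ := qbinom_mul_qpochFin (m := k + d + 1) (k := k) (by omega)
      rw [show k + d + 1 - (k + 1) = d by omega, qpochFin_succ] at h₁
      rw [show k + d + 1 - k = d + 1 by omega, qpochFin_succ] at h₂
      rw [show k + d + 1 + 1 - (k + 1) = d + 1 by omega, qbinom_succ_succ, qpochFin_succ,
        qpochFin_succ, qpochFin_succ]
      linear_combination (q ^ (k + 1) * (1 - q * q ^ d)) * h₁ + (1 - q * q ^ k) * h₂

theorem prod_one_add_mul_pow_eq_sum_qbinom (m : ℕ) (t : R) :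
    ∏ j ∈ range m, (1 + t * q ^ j) =
      ∑ k ∈ range (m + 1), qbinom q m k * q ^ k.choose 2 * t ^ k := by
  induction m generalizing t with
  | zero => simp
  | succ m ih =>
    have hchoose (k : ℕ) : q ^ (k + 1).choose 2 = q ^ k.choose 2 * q ^ k := by
      rw [Nat.choose_succ_succ', Nat.choose_one_right, pow_add, mul_comm]
    have hshift (j : ℕ) : 1 + t * q ^ (j + 1) = 1 + t * q * q ^ j := by ring
    rw [prod_range_succ', prod_congr rfl fun j _ => hshift j, ih, pow_zero, mul_one, mul_add,
      mul_one, sum_mul, sum_range_succ' (fun k => qbinom q m k * q ^ k.choose 2 * (t * q) ^ k),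
      sum_range_succ' (fun k => qbinom q (m + 1) k * q ^ k.choose 2 * t ^ k)]
    simp only [qbinom_succ_succ, add_mul, sum_add_distrib]
    rw [sum_range_succ (fun k => q ^ (k + 1) * qbinom q m (k + 1) * q ^ (k + 1).choose 2 *
      t ^ (k + 1)), qbinom_eq_zero_of_lt q m.lt_succ_self]
    have e₁ (k : ℕ) : qbinom q m (k + 1) * q ^ (k + 1).choose 2 * (t * q) ^ (k + 1) =
        q ^ (k + 1) * qbinom q m (k + 1) * q ^ (k + 1).choose 2 * t ^ (k + 1) := by ring
    have e₂ (k : ℕ) : qbinom q m k * q ^ k.choose 2 * (t * q) ^ k * t =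
        qbinom q m k * q ^ (k + 1).choose 2 * t ^ (k + 1) := by rw [hchoose]; ring
    simp only [e₁, e₂, qbinom_zero_right, Nat.choose_zero_succ, pow_zero, mul_one, mul_zero]
    ring

end QBinomial

lemma Int.mul_sub_one_ediv_two_nonneg (n : ℤ) : 0 ≤ n * (n - 1) / 2 := by
  refine Int.ediv_nonneg ?_ zero_le_two
  rcases le_or_gt n 0 with h | h <;> nlinarith

lemma Int.add_mul_add_sub_one_ediv_two (m n : ℤ) :
    (m + n) * (m + n - 1) / 2 = m * (m - 1) / 2 + n * (n - 1) / 2 + m * n := by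
  have h : (m + n) * (m + n - 1) = m * (m - 1) + n * (n - 1) + 2 * (m * n) := by ring
  obtain ⟨a, ha⟩ := Int.even_mul_pred_self m
  obtain ⟨b, hb⟩ := Int.even_mul_pred_self n
  omega

lemma Int.toNat_natCast_mul_sub_one_ediv_two (k : ℕ) :
    ((k : ℤ) * ((k : ℤ) - 1) / 2).toNat = k.choose 2 := by
  rw [Nat.choose_two_right]
  rcases k with _ | k
  · rfl
  · have h : (((k + 1) * k : ℕ) : ℤ) = ((k : ℤ) + 1) * k := by push_cast; ring
    push_cast
    rw [add_sub_cancel_right]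
    omega

lemma Int.one_le_mul_sub_one_ediv_two {n : ℤ} (h₀ : n ≠ 0) (h₁ : n ≠ 1) : 1 ≤ n * (n - 1) / 2 := by
  obtain ⟨a, ha⟩ := Int.even_mul_pred_self n
  have : 2 ≤ n * (n - 1) := by
    rcases (by omega : n ≤ -1 ∨ 2 ≤ n) with h | h <;> nlinarith
  omega

section TripleProductTerm

variable {K : Type*} [Field K] {q z : K}

def tripleProductTerm (q z : K) (n : ℤ) : K := q ^ (n * (n - 1) / 2).toNat * (-z) ^ n

lemma tripleProductTerm_eq_zpow (q z : K) (n : ℤ) :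
    tripleProductTerm q z n = q ^ (n * (n - 1) / 2) * (-z) ^ n := by
  rw [tripleProductTerm, ← zpow_natCast, Int.toNat_of_nonneg (Int.mul_sub_one_ediv_two_nonneg n)]

lemma tripleProductTerm_natCast (q z : K) (k : ℕ) :
    tripleProductTerm q z k = q ^ k.choose 2 * (-z) ^ k := by
  rw [tripleProductTerm, Int.toNat_natCast_mul_sub_one_ediv_two, zpow_natCast]

lemma tripleProductTerm_add (hq : q ≠ 0) (hz : z ≠ 0) (m n : ℤ) :
    tripleProductTerm q z (m + n) =
      tripleProductTerm q z m * tripleProductTerm q z n * q ^ (m * n) := by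
  simp only [tripleProductTerm_eq_zpow, Int.add_mul_add_sub_one_ediv_two, zpow_add₀ hq,
    zpow_add₀ (neg_ne_zero.mpr hz)]
  ring

lemma tripleProductTerm_neg_natCast (q z : K) (k : ℕ) :
    tripleProductTerm q z (-k) = q ^ (k + 1).choose 2 * (-z)⁻¹ ^ k := by
  rw [tripleProductTerm, show -(k : ℤ) * (-k - 1) = ((k + 1 : ℕ) : ℤ) * (((k + 1 : ℕ) : ℤ) - 1) by
    push_cast; ring, Int.toNat_natCast_mul_sub_one_ediv_two, zpow_neg, zpow_natCast, inv_pow]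

/-- The `q`-binomial theorem at `t = -z q ^ s`, normalised by the term of index `s`. -/
theorem tripleProductTerm_mul_prod_eq_sum_qbinom (hq : q ≠ 0) (hz : z ≠ 0) (m : ℕ) (s : ℤ) :
    tripleProductTerm q z s * ∏ j ∈ range m, (1 - z * q ^ ((j : ℤ) + s)) =
      ∑ k ∈ range (m + 1), qbinom q m k * tripleProductTerm q z (k + s) := by
  have hfactor (j : ℕ) : 1 - z * q ^ ((j : ℤ) + s) = 1 + -z * q ^ s * q ^ j := by
    rw [zpow_add₀ hq, zpow_natCast]; ring
  have hpow (k : ℕ) : (q ^ s) ^ k = q ^ ((k : ℤ) * s) := by rw [mul_comm, zpow_mul, zpow_natCast]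
  simp only [hfactor, prod_one_add_mul_pow_eq_sum_qbinom, mul_sum, tripleProductTerm_add hq hz,
    tripleProductTerm_natCast, mul_pow, hpow]
  exact sum_congr rfl fun k _ => by ring

lemma tripleProductTerm_neg_mul_prod (hq : q ≠ 0) (hz : z ≠ 0) (N : ℕ) :
    tripleProductTerm q z (-N) * ∏ j ∈ range N, (1 - z * q ^ (-((j : ℤ) + 1))) =
      qpochFin (q * z⁻¹) q N := by
  induction N with
  | zero => simp [tripleProductTerm, qpochFin]
  | succ N ih =>
    have hstep : tripleProductTerm q z (-(N + 1 : ℕ)) =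
        tripleProductTerm q z (-N) * (q ^ (N + 1) * (-z)⁻¹) := by
      rw [show -((N + 1 : ℕ) : ℤ) = -N + -((1 : ℕ) : ℤ) by push_cast; ring,
        tripleProductTerm_add hq hz, tripleProductTerm_neg_natCast q z 1, neg_mul_neg, Nat.cast_one,
        mul_one, zpow_natCast]
      norm_num
      ring
    rw [hstep, prod_range_succ, qpochFin_succ, ← ih,
      show ((N : ℤ) + 1) = ((N + 1 : ℕ) : ℤ) by push_cast; rfl, zpow_neg, zpow_natCast]
    field_simp
    ring

theorem qpochFin_mul_qpochFin_eq_sum_qbinom (hq : q ≠ 0) (hz : z ≠ 0) (N : ℕ) :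
    qpochFin z q N * qpochFin (q * z⁻¹) q N =
      ∑ k ∈ range (2 * N + 1), qbinom q (2 * N) k * tripleProductTerm q z (k - N) := by
  have hlow : ∏ j ∈ range N, (1 - z * q ^ ((j : ℤ) + -N)) =
      ∏ j ∈ range N, (1 - z * q ^ (-((j : ℤ) + 1))) := by
    rw [← prod_range_reflect]
    refine prod_congr rfl fun j hj => ?_
    rw [Nat.cast_sub (by simp at hj; omega), Nat.cast_sub (by simp at hj; omega)]
    ring_nf
  have hhigh : ∏ j ∈ range N, (1 - z * q ^ (((N + j : ℕ) : ℤ) + -N)) = qpochFin z q N := by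
    simp [qpochFin]
  rw [← tripleProductTerm_neg_mul_prod hq hz, ← hlow, ← hhigh]
  simp only [sub_eq_add_neg, ← tripleProductTerm_mul_prod_eq_sum_qbinom hq hz, two_mul,
    prod_range_add]
  ring

end TripleProductTerm

/-- `[2N, N + n]_q`, set to `0` for `n < -N` so that Cauchy's finite form becomes a series
over `ℤ`. -/
def centralQbinom {R : Type*} [CommRing R] (q : R) (N : ℕ) (n : ℤ) : R :=
  if -(N : ℤ) ≤ n then qbinom q (2 * N) (n + N).toNat else 0

lemma tsum_centralQbinom_mul_tripleProductTerm (q z : ℂ) (N : ℕ) :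
    ∑' n : ℤ, centralQbinom q N n * tripleProductTerm q z n =
      ∑ k ∈ range (2 * N + 1), qbinom q (2 * N) k * tripleProductTerm q z (k - N) := by
  have hshift : Function.Injective fun k : ℕ => (k : ℤ) - N := fun a b h => by simpa using h
  rw [← hshift.tsum_eq, tsum_eq_sum]
  · refine sum_congr rfl fun k _ => ?_
    simp [centralQbinom]
  · intro k hk
    simp only [mem_range, not_lt] at hk
    simp [centralQbinom, qbinom_eq_zero_of_lt q (show 2 * N < k by omega)]
  · intro n hn
    refine ⟨(n + N).toNat, ?_⟩
    by_cases h : -(N : ℤ) ≤ n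
    · simp only; omega
    · exact absurd (by simp [centralQbinom, h]) hn

section Analytic

variable {q : ℂ}

lemma one_sub_mul_pow_ne_zero (hq : ‖q‖ < 1) (j : ℕ) : 1 - q * q ^ j ≠ 0 := by
  have h : ‖q * q ^ j‖ < 1 := by
    rw [← pow_succ', norm_pow]; exact pow_lt_one₀ (norm_nonneg q) hq j.succ_ne_zero
  intro h0
  rw [← sub_eq_zero.mp h0, norm_one] at h
  exact lt_irrefl _ h

lemma summable_norm_mul_pow (hq : ‖q‖ < 1) (z : ℂ) : Summable fun j : ℕ => ‖-(z * q ^ j)‖ := by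
  simpa [norm_mul, norm_pow] using (summable_geometric_of_lt_one (norm_nonneg q) hq).mul_left ‖z‖

lemma tendsto_qpochFin (hq : ‖q‖ < 1) (z : ℂ) : Tendsto (qpochFin z q) atTop (𝓝 (qpoch z q)) := by
  have h := multipliable_one_add_of_summable (summable_norm_mul_pow hq z)
  simp only [← sub_eq_add_neg] at h
  exact h.hasProd.tendsto_prod_nat

lemma qpoch_self_ne_zero (hq : ‖q‖ < 1) : qpoch q q ≠ 0 := by
  have h := tprod_one_add_ne_zero_of_summable
    (fun j => by simpa [← sub_eq_add_neg] using one_sub_mul_pow_ne_zero hq j)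
    (summable_norm_mul_pow hq q)
  rw [qpoch]
  simpa [← sub_eq_add_neg] using h

lemma qpochFin_self_ne_zero (hq : ‖q‖ < 1) (n : ℕ) : qpochFin q q n ≠ 0 :=
  prod_ne_zero_iff.mpr fun j _ => one_sub_mul_pow_ne_zero hq j

lemma qbinom_eq_div (hq : ‖q‖ < 1) {m k : ℕ} (hkm : k ≤ m) :
    qbinom q m k = qpochFin q q m / (qpochFin q q k * qpochFin q q (m - k)) := by
  rw [eq_div_iff (mul_ne_zero (qpochFin_self_ne_zero hq k) (qpochFin_self_ne_zero hq _)),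
    ← mul_assoc, qbinom_mul_qpochFin q hkm]

lemma exists_norm_qbinom_le (hq : ‖q‖ < 1) : ∃ C, ∀ m k, ‖qbinom q m k‖ ≤ C := by
  obtain ⟨A, hA⟩ := isBounded_iff_forall_norm_le.mp
    (Metric.isBounded_range_of_tendsto _ (tendsto_qpochFin hq q))
  obtain ⟨B, hB⟩ := isBounded_iff_forall_norm_le.mp (Metric.isBounded_range_of_tendsto _
    ((tendsto_qpochFin hq q).inv₀ (qpoch_self_ne_zero hq)))
  have hA0 : 0 ≤ A := (norm_nonneg _).trans (hA _ ⟨0, rfl⟩)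
  have hB0 : 0 ≤ B := (norm_nonneg _).trans (hB _ ⟨0, rfl⟩)
  refine ⟨A * B * B, fun m k => ?_⟩
  rcases le_or_gt k m with hkm | hmk
  · rw [qbinom_eq_div hq hkm, div_eq_mul_inv, mul_inv, ← mul_assoc, norm_mul, norm_mul]
    gcongr
    exacts [hA _ ⟨m, rfl⟩, hB _ ⟨k, rfl⟩, hB _ ⟨m - k, rfl⟩]
  · rw [qbinom_eq_zero_of_lt q hmk, norm_zero]
    positivity

lemma tendsto_centralQbinom (hq : ‖q‖ < 1) (n : ℤ) :
    Tendsto (fun N => centralQbinom q N n) atTop (𝓝 (qpoch q q)⁻¹) := by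
  have hP := qpoch_self_ne_zero hq
  have hA := tendsto_qpochFin hq q
  have h₁ : Tendsto (fun N : ℕ => 2 * N) atTop atTop :=
    tendsto_atTop_atTop.mpr fun b => ⟨b, fun N hN => by omega⟩
  have h₂ : Tendsto (fun N : ℕ => (n + N).toNat) atTop atTop :=
    tendsto_atTop_atTop.mpr fun b => ⟨b + n.natAbs, fun N hN => by omega⟩
  have h₃ : Tendsto (fun N : ℕ => 2 * N - (n + N).toNat) atTop atTop :=
    tendsto_atTop_atTop.mpr fun b => ⟨b + n.natAbs, fun N hN => by omega⟩
  have hlim := (hA.comp h₁).div ((hA.comp h₂).mul (hA.comp h₃)) (mul_ne_zero hP hP)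
  rw [div_mul_cancel_left₀ hP] at hlim
  refine hlim.congr' ?_
  filter_upwards [eventually_ge_atTop n.natAbs] with N hN
  rw [centralQbinom, if_pos (by omega), qbinom_eq_div hq (by omega)]
  rfl

lemma summable_pow_choose_two_mul_pow {Q : ℝ} (hQ0 : 0 ≤ Q) (hQ1 : Q < 1) (ρ : ℝ) :
    Summable fun n : ℕ => Q ^ n.choose 2 * ρ ^ n := by
  obtain ⟨M, hM⟩ : ∃ M : ℕ, Q ^ M * |ρ| ≤ 1 / 2 := by
    have h := (tendsto_pow_atTop_nhds_zero_of_lt_one hQ0 hQ1).mul_const |ρ|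
    rw [zero_mul] at h
    exact (h.eventually_le_const one_half_pos).exists
  refine .of_norm_bounded_eventually_nat summable_geometric_two ?_
  filter_upwards [eventually_ge_atTop (2 * M + 1)] with n hn
  have hchoose : M * n ≤ n.choose 2 := by
    rw [Nat.choose_two_right, Nat.le_div_iff_mul_le two_pos]
    calc M * n * 2 = n * (2 * M) := by ring
      _ ≤ n * (n - 1) := Nat.mul_le_mul_left n (by omega)
  calc ‖Q ^ n.choose 2 * ρ ^ n‖ = Q ^ n.choose 2 * |ρ| ^ n := by
        rw [norm_mul, norm_pow, norm_pow, Real.norm_of_nonneg hQ0, Real.norm_eq_abs]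
    _ ≤ Q ^ (M * n) * |ρ| ^ n :=
        mul_le_mul_of_nonneg_right (pow_le_pow_of_le_one hQ0 hQ1.le hchoose) (by positivity)
    _ = (Q ^ M * |ρ|) ^ n := by rw [mul_pow, pow_mul]
    _ ≤ (1 / 2) ^ n := by gcongr

lemma summable_norm_tripleProductTerm (hq : ‖q‖ < 1) (z : ℂ) :
    Summable fun n : ℤ => ‖tripleProductTerm q z n‖ := by
  have hsum := summable_pow_choose_two_mul_pow (norm_nonneg q) hq
  refine .of_nat_of_neg ?_ ?_
  · simpa [tripleProductTerm_natCast, norm_mul, norm_pow] using hsum ‖z‖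
  · refine (hsum ‖z‖⁻¹).of_nonneg_of_le (fun _ => norm_nonneg _) fun n => ?_
    rw [tripleProductTerm_neg_natCast, norm_mul, norm_pow, norm_pow, norm_inv, norm_neg]
    exact mul_le_mul_of_nonneg_right
      (pow_le_pow_of_le_one (norm_nonneg q) hq.le (Nat.choose_le_choose 2 n.le_succ))
      (by positivity)

lemma exists_norm_centralQbinom_le (hq : ‖q‖ < 1) : ∃ C, ∀ N n, ‖centralQbinom q N n‖ ≤ C := by
  obtain ⟨C, hC⟩ := exists_norm_qbinom_le hq
  refine ⟨C, fun N n => ?_⟩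
  unfold centralQbinom
  split_ifs
  · exact hC _ _
  · rw [norm_zero]
    exact (norm_nonneg _).trans (hC 0 0)

theorem jacobi_triple_product_of_ne_zero (hq : ‖q‖ < 1) (hq0 : q ≠ 0) {z : ℂ} (hz : z ≠ 0) :
    qpoch z q * qpoch (q * z⁻¹) q = (qpoch q q)⁻¹ * ∑' n, tripleProductTerm q z n := by
  obtain ⟨C, hC⟩ := exists_norm_centralQbinom_le hq
  have hbound (N : ℕ) (n : ℤ) :
      ‖centralQbinom q N n * tripleProductTerm q z n‖ ≤ C * ‖tripleProductTerm q z n‖ := by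
    rw [norm_mul]; gcongr; exact hC N n
  have hsum := tendsto_tsum_of_dominated_convergence
    ((summable_norm_tripleProductTerm hq z).mul_left C)
    (fun n => (tendsto_centralQbinom hq n).mul_const (tripleProductTerm q z n))
    (.of_forall hbound)
  simp only [tsum_centralQbinom_mul_tripleProductTerm,
    ← qpochFin_mul_qpochFin_eq_sum_qbinom hq0 hz] at hsum
  rw [tendsto_nhds_unique ((tendsto_qpochFin hq z).mul (tendsto_qpochFin hq (q * z⁻¹))) hsum,
    tsum_mul_left]

end Analytic

lemma qpoch_zero_right (z : ℂ) : qpoch z 0 = 1 - z := by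
  rw [qpoch, tprod_eq_mulSingle 0 fun j hj => by simp [hj]]
  simp

lemma tsum_tripleProductTerm_zero_left (z : ℂ) : ∑' n, tripleProductTerm 0 z n = 1 - z := by
  rw [tsum_eq_sum (s := {0, 1}) fun n hn => ?_, sum_pair zero_ne_one]
  · simp [tripleProductTerm, sub_eq_add_neg]
  · simp only [mem_insert, mem_singleton, not_or] at hn
    have := Int.one_le_mul_sub_one_ediv_two hn.1 hn.2
    simp [tripleProductTerm, zero_pow (show (n * (n - 1) / 2).toNat ≠ 0 by omega)]

theorem jacobi_triple_product (p z : ℂ) (hp : ‖p‖ < 1) (hz : z ≠ 0) :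
    Summable (fun n : ℤ => p ^ (n * (n - 1) / 2).toNat * (-z) ^ n) ∧
      qpoch z p * qpoch (p * z⁻¹) p =
        (qpoch p p)⁻¹ * ∑' n : ℤ, p ^ (n * (n - 1) / 2).toNat * (-z) ^ n := by
  change Summable (tripleProductTerm p z) ∧ _ = _ * ∑' n, tripleProductTerm p z n
  refine ⟨(summable_norm_tripleProductTerm hp z).of_norm, ?_⟩
  rcases eq_or_ne p 0 with rfl | hp0
  · simp [qpoch_zero_right, tsum_tripleProductTerm_zero_left]
  · exact jacobi_triple_product_of_ne_zero hp hp0 hz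
end

section
/- Let p, q be complex numbers with |p| < 1, |q| < 1 and let L be a nonnegative integer such that θ(q^{−j};p) ≠ 0 for all 1 ≤ j ≤ L. Then the function ε ↦ (1 − ε)·Γ(ε q^{−L};p,q) tends to 1/((p;p)_∞ (q;q)_∞ · ∏_{j=1}^{L} θ(q^{−j};p)) as ε tends to 1 (through values where Γ(ε q^{−L};p,q) is defined). -/
open Complex Real Filter Topology

/-!
At `z = ε q^{-L}` the denominator factor of `Γ(z;p,q)` with `(j, k) = (0, L)` is exactly `1 - ε`,
so `(1 - ε) Γ(ε q^{-L};p,q) = N(ε) / D(ε)`, where `N` is the numerator product and `D` the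
denominator product with that factor removed. Both are absolutely convergent products of factors
`1 - g(ε) a_{jk}` with `g` continuous near `1`, hence continuous at `ε = 1`. Peeling off the column
`k = 0` of the double products and inducting on `L` gives
`D(1) = (p;p)_∞ (q;q)_∞ ∏_{j=1}^{L} θ(q^{-j};p) · N(1)`. As `N(1) ≠ 0` and the theta values are
nonzero, `D(1) ≠ 0`, and the limit is `N(1) / D(1)`.
-/

section NormedRing

lemma summable_norm_ite_zero {ι E : Type*} [SeminormedAddCommGroup E] [DecidableEq ι]
    {w : ι → E} (hw : Summable (‖w ·‖)) (i : ι) :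
    Summable fun j ↦ ‖if j = i then 0 else w j‖ :=
  hw.of_nonneg_of_le (fun _ ↦ norm_nonneg _) fun j ↦ by split_ifs <;> simp

lemma one_sub_ne_zero_of_norm_lt_one {R : Type*} [SeminormedRing R] [NormOneClass R] {x : R}
    (h : ‖x‖ < 1) : 1 - x ≠ 0 :=
  sub_ne_zero.2 fun h1 ↦ by simp [← h1] at h

variable {ι R : Type*} [NormedCommRing R] [NormOneClass R] [CompleteSpace R] {w : ι → R}

lemma multipliable_one_sub (hw : Summable (‖w ·‖)) : Multipliable fun i ↦ 1 - w i := by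
  simpa [sub_eq_add_neg] using
    multipliable_one_add_of_summable (f := fun i ↦ -w i) (by simpa using hw)

lemma tprod_one_sub_ne_zero [NormMulClass R] (hw : Summable (‖w ·‖)) (h : ∀ i, 1 - w i ≠ 0) :
    ∏' i, (1 - w i) ≠ 0 := by
  simpa [sub_eq_add_neg] using
    tprod_one_add_ne_zero_of_summable (f := fun i ↦ -w i) (by simpa [sub_eq_add_neg] using h)
      (by simpa using hw)

lemma tprod_one_sub_eq_mul_tprod_ite [DecidableEq ι] (hw : Summable (‖w ·‖)) (i : ι) :
    ∏' j, (1 - w j) = (1 - w i) * ∏' j, (1 - if j = i then 0 else w j) := by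
  have hupd : Function.update (fun j ↦ 1 - w j) i 1 = fun j ↦ 1 - if j = i then 0 else w j := by
    ext j; by_cases hj : j = i <;> simp [hj]
  rw [Multipliable.tprod_eq_mul_tprod_ite' i
    (hupd ▸ multipliable_one_sub (summable_norm_ite_zero hw i))]
  congr 1
  exact tprod_congr fun j ↦ by split_ifs <;> simp

variable {α : Type*} [TopologicalSpace α] {g : α → R} {a : ι → R}

lemma ContinuousOn.tprod_one_sub_mul {K : Set α} (hK : IsCompact K) (hg : ContinuousOn g K)
    (ha : Summable (‖a ·‖)) : ContinuousOn (fun x ↦ ∏' i, (1 - g x * a i)) K := by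
  obtain ⟨C, hC⟩ := hK.exists_bound_of_continuousOn hg
  have hbound : ∀ᶠ i in cofinite, ∀ x ∈ K, ‖-(g x * a i)‖ ≤ C * ‖a i‖ :=
    .of_forall fun i x hx ↦ by
      rw [norm_neg]
      exact (norm_mul_le _ _).trans (mul_le_mul_of_nonneg_right (hC x hx) (norm_nonneg _))
  have hcont (i : ι) : ContinuousOn (fun x ↦ g x * a i) K := hg.mul continuousOn_const
  have hprod := (ha.mul_left C).hasProdUniformlyOn_one_add hK hbound fun i ↦ (hcont i).neg
  simp only [← sub_eq_add_neg] at hprod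
  exact hprod.tendstoUniformlyOn.continuousOn <| .of_forall fun s ↦
    continuousOn_finsetProd s fun i _ ↦ continuousOn_const.sub (hcont i)

lemma continuousAt_tprod_one_sub_mul [LocallyCompactSpace α] {U : Set α} {x : α}
    (hU : U ∈ 𝓝 x) (hg : ContinuousOn g U) (ha : Summable (‖a ·‖)) :
    ContinuousAt (fun y ↦ ∏' i, (1 - g y * a i)) x := by
  obtain ⟨K, hKx, hKU, hK⟩ := local_compact_nhds hU
  exact ((hg.mono hKU).tprod_one_sub_mul hK ha).continuousAt hKx

end NormedRing

section ProdNat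

variable {α β M : Type*} [CommMonoid M] [TopologicalSpace M] [ContinuousMul M] {a b : M}

lemma HasProd.zero_mul_snd {f : α × ℕ → M} (h₀ : HasProd (fun i ↦ f (i, 0)) a)
    (h₁ : HasProd (fun x : α × ℕ ↦ f (x.1, x.2 + 1)) b) : HasProd f (a * b) := by
  set g₀ : α → α × ℕ := fun i ↦ (i, 0)
  set g₁ : α × ℕ → α × ℕ := fun x ↦ (x.1, x.2 + 1)
  have hinj₀ : g₀.Injective := Prod.mk_left_injective 0
  have hinj₁ : g₁.Injective := Function.injective_id.prodMap (add_left_injective 1)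
  have hcompl : IsCompl (Set.range g₀) (Set.range g₁) := by
    have hrange : Set.range g₁ = (Set.range g₀)ᶜ := by ext ⟨i, k⟩; cases k <;> simp [g₀, g₁]
    rw [hrange]
    exact isCompl_compl
  exact HasProd.mul_isCompl hcompl (hinj₀.hasProd_range_iff.2 h₀) (hinj₁.hasProd_range_iff.2 h₁)

lemma HasProd.zero_mul_fst {f : ℕ × β → M} (h₀ : HasProd (fun k ↦ f (0, k)) a)
    (h₁ : HasProd (fun x : ℕ × β ↦ f (x.1 + 1, x.2)) b) : HasProd f (a * b) := by
  rw [← (Equiv.prodComm β ℕ).hasProd_iff] at h₁ ⊢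
  exact HasProd.zero_mul_snd h₀ h₁

variable {R : Type*} [NormedCommRing R] [NormOneClass R] [CompleteSpace R]

lemma tprod_one_sub_eq_zero_mul_snd {w : α × ℕ → R} (hw : Summable (‖w ·‖)) :
    ∏' x, (1 - w x) = (∏' i, (1 - w (i, 0))) * ∏' x : α × ℕ, (1 - w (x.1, x.2 + 1)) := by
  have h₀ : Summable fun i ↦ ‖w (i, 0)‖ := hw.comp_injective (Prod.mk_left_injective 0)
  have h₁ : Summable fun x : α × ℕ ↦ ‖w (x.1, x.2 + 1)‖ :=
    hw.comp_injective (Function.injective_id.prodMap (add_left_injective 1))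
  exact (HasProd.zero_mul_snd (f := fun x ↦ 1 - w x) (multipliable_one_sub h₀).hasProd
    (multipliable_one_sub h₁).hasProd).tprod_eq

lemma tprod_one_sub_eq_zero_mul_fst {w : ℕ × β → R} (hw : Summable (‖w ·‖)) :
    ∏' x, (1 - w x) = (∏' i, (1 - w (0, i))) * ∏' x : ℕ × β, (1 - w (x.1 + 1, x.2)) := by
  have h₀ : Summable fun i ↦ ‖w (0, i)‖ := hw.comp_injective (Prod.mk_right_injective 0)
  have h₁ : Summable fun x : ℕ × β ↦ ‖w (x.1 + 1, x.2)‖ :=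
    hw.comp_injective ((add_left_injective 1).prodMap Function.injective_id)
  exact (HasProd.zero_mul_fst (f := fun x ↦ 1 - w x) (multipliable_one_sub h₀).hasProd
    (multipliable_one_sub h₁).hasProd).tprod_eq

end ProdNat

section EllipticGamma

variable {p q : ℂ}

lemma summable_norm_mul_pow_s17 (c : ℂ) {t : ℂ} (ht : ‖t‖ < 1) :
    Summable fun j : ℕ ↦ ‖c * t ^ j‖ := by
  simpa [norm_mul, norm_pow] using (summable_geometric_of_lt_one (norm_nonneg t) ht).mul_left ‖c‖

lemma summable_norm_mul_pow_mul_pow (c : ℂ) (hp : ‖p‖ < 1) (hq : ‖q‖ < 1) :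
    Summable fun x : ℕ × ℕ ↦ ‖c * p ^ x.1 * q ^ x.2‖ := by
  have h := ((summable_geometric_of_lt_one (norm_nonneg p) hp).mul_of_nonneg
    (summable_geometric_of_lt_one (norm_nonneg q) hq) (fun _ ↦ by positivity)
    (fun _ ↦ by positivity)).mul_left ‖c‖
  exact h.congr fun x ↦ by simp only [norm_mul, norm_pow]; ring

lemma summable_norm_mul_pow_succ_mul_pow_succ (c : ℂ) (hp : ‖p‖ < 1) (hq : ‖q‖ < 1) :
    Summable fun x : ℕ × ℕ ↦ ‖c * p ^ (x.1 + 1) * q ^ (x.2 + 1)‖ :=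
  (summable_norm_mul_pow_mul_pow (c * p * q) hp hq).congr fun x ↦ by ring_nf

lemma qpoch_ne_zero {z t : ℂ} (hz : ‖z‖ < 1) (ht : ‖t‖ < 1) : qpoch z t ≠ 0 := by
  refine tprod_one_sub_ne_zero (summable_norm_mul_pow_s17 z ht) fun j ↦
    one_sub_ne_zero_of_norm_lt_one ?_
  rw [norm_mul, norm_pow]
  exact (mul_le_of_le_one_right (norm_nonneg z) (pow_le_one₀ (norm_nonneg t) ht.le)).trans_lt hz

lemma tprod_one_sub_pow_mul_pow_ne_zero (hp : ‖p‖ < 1) (hq : ‖q‖ < 1) (L : ℕ) :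
    ∏' x : ℕ × ℕ, (1 - q ^ L * p ^ (x.1 + 1) * q ^ (x.2 + 1)) ≠ 0 := by
  refine tprod_one_sub_ne_zero (summable_norm_mul_pow_succ_mul_pow_succ _ hp hq) fun x ↦
    one_sub_ne_zero_of_norm_lt_one ?_
  calc ‖q ^ L * p ^ (x.1 + 1) * q ^ (x.2 + 1)‖
      = ‖p‖ * (‖q‖ ^ L * ‖p‖ ^ x.1 * ‖q‖ ^ (x.2 + 1)) := by simp only [norm_mul, norm_pow]; ring
    _ ≤ ‖p‖ := mul_le_of_le_one_right (norm_nonneg p) (by bound)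
    _ < 1 := hp

lemma tprod_one_sub_pow_mul_pow_succ_eq (hp : ‖p‖ < 1) (hq : ‖q‖ < 1) (L : ℕ) :
    ∏' x : ℕ × ℕ, (1 - q ^ L * p ^ (x.1 + 1) * q ^ (x.2 + 1)) = qpoch (p * q ^ (L + 1)) p *
      ∏' x : ℕ × ℕ, (1 - q ^ (L + 1) * p ^ (x.1 + 1) * q ^ (x.2 + 1)) := by
  rw [tprod_one_sub_eq_zero_mul_snd (summable_norm_mul_pow_succ_mul_pow_succ _ hp hq)]
  congr 1
  · exact tprod_congr fun i ↦ by ring_nf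
  · exact tprod_congr fun x ↦ by ring_nf

lemma tprod_one_sub_pinched_zero (hp : ‖p‖ < 1) (hq : ‖q‖ < 1) :
    ∏' x : ℕ × ℕ, (1 - if x = (0, 0) then 0 else p ^ x.1 * q ^ x.2) =
      qpoch p p * qpoch q q * ∏' x : ℕ × ℕ, (1 - p ^ (x.1 + 1) * q ^ (x.2 + 1)) := by
  have hsum : Summable fun x : ℕ × ℕ ↦ ‖p ^ x.1 * q ^ x.2‖ := by
    simpa using summable_norm_mul_pow_mul_pow 1 hp hq
  have hcol : ∏' i : ℕ, (1 - if i = 0 then 0 else p ^ i) = qpoch p p := by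
    rw [tprod_eq_zero_mul']
    · simp [qpoch, pow_succ']
    · simpa [pow_succ'] using multipliable_one_sub (summable_norm_mul_pow_s17 p hp)
  have hrest : ∏' x : ℕ × ℕ, (1 - p ^ x.1 * q ^ (x.2 + 1)) =
      qpoch q q * ∏' x : ℕ × ℕ, (1 - p ^ (x.1 + 1) * q ^ (x.2 + 1)) := by
    rw [tprod_one_sub_eq_zero_mul_fst
      ((summable_norm_mul_pow_mul_pow q hp hq).congr fun x ↦ by ring_nf)]
    simp [qpoch, pow_succ']
  rw [tprod_one_sub_eq_zero_mul_snd (summable_norm_ite_zero hsum _)]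
  simp only [Prod.mk.injEq, and_true, pow_zero, mul_one, Nat.add_eq_zero_iff, one_ne_zero,
    and_false, if_false]
  rw [hcol, hrest, mul_assoc]

lemma tprod_one_sub_pinched_succ (hp : ‖p‖ < 1) (hq : ‖q‖ < 1) (hq0 : q ≠ 0) (L : ℕ) :
    ∏' x : ℕ × ℕ,
        (1 - if x = (0, L + 1) then 0 else q ^ (-((L + 1 : ℕ) : ℤ)) * p ^ x.1 * q ^ x.2) =
      qpoch (q ^ (-((L + 1 : ℕ) : ℤ))) p *
        ∏' x : ℕ × ℕ, (1 - if x = (0, L) then 0 else q ^ (-(L : ℤ)) * p ^ x.1 * q ^ x.2) := by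
  have hcoef (i k : ℕ) :
      q ^ (-((L + 1 : ℕ) : ℤ)) * p ^ i * q ^ (k + 1) = q ^ (-(L : ℤ)) * p ^ i * q ^ k := by
    simp only [zpow_neg, zpow_natCast]
    field_simp
    ring
  rw [tprod_one_sub_eq_zero_mul_snd
    (summable_norm_ite_zero (summable_norm_mul_pow_mul_pow _ hp hq) _)]
  congr 1
  · simp [qpoch]
  · simp only [Prod.ext_iff, add_left_inj, hcoef]

lemma tprod_one_sub_pinched_eq (hp : ‖p‖ < 1) (hq : ‖q‖ < 1) (hq0 : q ≠ 0) (L : ℕ) :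
    ∏' x : ℕ × ℕ, (1 - if x = (0, L) then 0 else q ^ (-(L : ℤ)) * p ^ x.1 * q ^ x.2) =
      qpoch p p * qpoch q q * (∏ m ∈ Finset.Icc 1 L, theta p (q ^ (-(m : ℤ)))) *
        ∏' x : ℕ × ℕ, (1 - q ^ L * p ^ (x.1 + 1) * q ^ (x.2 + 1)) := by
  induction L with
  | zero => simpa using tprod_one_sub_pinched_zero hp hq
  | succ L ih =>
    rw [tprod_one_sub_pinched_succ hp hq hq0, ih, tprod_one_sub_pow_mul_pow_succ_eq hp hq,
      Finset.prod_Icc_succ_top (by omega), theta, zpow_neg, zpow_natCast, inv_inv]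
    ring

lemma egamma_eq_tprod_div (hp : ‖p‖ < 1) (hq : ‖q‖ < 1) {z : ℂ}
    (hz : ∀ j k : ℕ, z * p ^ j * q ^ k ≠ 1) :
    egamma z p q = (∏' x : ℕ × ℕ, (1 - z⁻¹ * p ^ (x.1 + 1) * q ^ (x.2 + 1))) /
      ∏' x : ℕ × ℕ, (1 - z * p ^ x.1 * q ^ x.2) := by
  have hden := summable_norm_mul_pow_mul_pow z hp hq
  exact Multipliable.tprod_div₀
    (multipliable_one_sub (summable_norm_mul_pow_succ_mul_pow_succ z⁻¹ hp hq))
    (multipliable_one_sub hden)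
    (tprod_one_sub_ne_zero hden fun x ↦ sub_ne_zero.2 (hz x.1 x.2).symm)

lemma one_sub_mul_egamma_eq_div (hp : ‖p‖ < 1) (hq : ‖q‖ < 1) (hq0 : q ≠ 0) {L : ℕ} {ε : ℂ}
    (hε : ∀ j k : ℕ, ε * q ^ (-(L : ℤ)) * p ^ j * q ^ k ≠ 1) :
    (1 - ε) * egamma (ε * q ^ (-(L : ℤ))) p q =
      (∏' x : ℕ × ℕ, (1 - ε⁻¹ * (q ^ L * p ^ (x.1 + 1) * q ^ (x.2 + 1)))) /
        ∏' x : ℕ × ℕ, (1 - ε * if x = (0, L) then 0 else q ^ (-(L : ℤ)) * p ^ x.1 * q ^ x.2) := by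
  have hqL : q ^ (-(L : ℤ)) * q ^ L = 1 := by simp [zpow_neg, hq0]
  have hε1 : 1 - ε ≠ 0 := fun h ↦
    hε 0 L (by rw [pow_zero, mul_one, mul_assoc, hqL, mul_one, ← sub_eq_zero.1 h])
  have hfactor : 1 - ε * q ^ (-(L : ℤ)) * p ^ (0, L).1 * q ^ (0, L).2 = 1 - ε := by
    rw [pow_zero, mul_one, mul_assoc, hqL, mul_one]
  have hnum : ∏' x : ℕ × ℕ, (1 - (ε * q ^ (-(L : ℤ)))⁻¹ * p ^ (x.1 + 1) * q ^ (x.2 + 1)) =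
      ∏' x : ℕ × ℕ, (1 - ε⁻¹ * (q ^ L * p ^ (x.1 + 1) * q ^ (x.2 + 1))) :=
    tprod_congr fun x ↦ by rw [mul_inv, zpow_neg, zpow_natCast, inv_inv]; ring
  have hden : ∏' x : ℕ × ℕ,
      (1 - if x = (0, L) then 0 else ε * q ^ (-(L : ℤ)) * p ^ x.1 * q ^ x.2) =
      ∏' x : ℕ × ℕ, (1 - ε * if x = (0, L) then 0 else q ^ (-(L : ℤ)) * p ^ x.1 * q ^ x.2) :=
    tprod_congr fun x ↦ by split_ifs <;> ring
  rw [egamma_eq_tprod_div hp hq (by simpa [mul_assoc] using hε),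
    tprod_one_sub_eq_mul_tprod_ite (summable_norm_mul_pow_mul_pow _ hp hq) (0, L), hfactor, hnum,
    hden, mul_div_assoc', mul_div_mul_left _ _ hε1]

end EllipticGamma

theorem egamma_pinching_limit (p q : ℂ) (hp : ‖p‖ < 1) (hq : ‖q‖ < 1) (hq0 : q ≠ 0)
    (L : ℕ) (hθ : ∀ j ∈ Finset.Icc 1 L, theta p (q ^ (-(j : ℤ))) ≠ 0) :
    Tendsto (fun ε : ℂ => (1 - ε) * egamma (ε * q ^ (-(L : ℤ))) p q)
      (𝓝[{ε : ℂ | ∀ j k : ℕ, ε * q ^ (-(L : ℤ)) * p ^ j * q ^ k ≠ 1}] 1)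
      (𝓝 ((qpoch p p * qpoch q q * ∏ j ∈ Finset.Icc 1 L, theta p (q ^ (-(j : ℤ))))⁻¹)) := by
  set P := qpoch p p * qpoch q q * ∏ j ∈ Finset.Icc 1 L, theta p (q ^ (-(j : ℤ)))
  set b : ℕ × ℕ → ℂ := fun x ↦ q ^ L * p ^ (x.1 + 1) * q ^ (x.2 + 1)
  set a : ℕ × ℕ → ℂ := fun x ↦ if x = (0, L) then 0 else q ^ (-(L : ℤ)) * p ^ x.1 * q ^ x.2
  have hb : Summable (‖b ·‖) := summable_norm_mul_pow_succ_mul_pow_succ _ hp hq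
  have ha : Summable (‖a ·‖) := summable_norm_ite_zero (summable_norm_mul_pow_mul_pow _ hp hq) _
  have hN : ContinuousAt (fun ε : ℂ ↦ ∏' x, (1 - ε⁻¹ * b x)) 1 :=
    continuousAt_tprod_one_sub_mul (compl_singleton_mem_nhds one_ne_zero) continuousOn_inv₀ hb
  have hD : ContinuousAt (fun ε : ℂ ↦ ∏' x, (1 - ε * a x)) 1 :=
    continuousAt_tprod_one_sub_mul univ_mem continuousOn_id ha
  have hN1 : ∏' x, (1 - (1 : ℂ)⁻¹ * b x) ≠ 0 := by
    simpa using tprod_one_sub_pow_mul_pow_ne_zero hp hq L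
  have hP : P ≠ 0 := mul_ne_zero (mul_ne_zero (qpoch_ne_zero hp hp) (qpoch_ne_zero hq hq))
    (Finset.prod_ne_zero_iff.2 hθ)
  have hD1 : ∏' x, (1 - (1 : ℂ) * a x) = P * ∏' x, (1 - (1 : ℂ)⁻¹ * b x) := by
    simp only [one_mul, inv_one]
    exact tprod_one_sub_pinched_eq hp hq hq0 L
  have hvalue : (∏' x, (1 - (1 : ℂ)⁻¹ * b x)) / ∏' x, (1 - (1 : ℂ) * a x) = P⁻¹ := by
    rw [hD1, div_mul_cancel_right₀ hN1]
  rw [← hvalue]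
  refine ((hN.div hD (hD1 ▸ mul_ne_zero hP hN1)).tendsto.mono_left nhdsWithin_le_nhds).congr' ?_
  exact eventually_nhdsWithin_of_forall fun ε hε ↦ (one_sub_mul_egamma_eq_div hp hq hq0 hε).symm
end
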